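/- arXiv:2305.18929 — 3 statements merged into one kernel-verified Lean document; each statement's English description precedes it below -/
import Mathlib

section
/- Fix a ∈ R^d, τ > 0, and an initial point v_{-1} ∈ R^d. Define the sequence v_k = v_{k-1} + clip_τ(a − v_{k-1}) for k ≥ 0. Then for all k ≥ 0, ‖v_k − a‖ ≤ max{0, ‖v_{-1} − a‖ − (k+1)τ}. In particular, if k ≥ ⌈‖v_{-1} − a‖/τ − 1⌉ then v_k = a. -/
/-!
Each step moves `v` along the segment towards `a`, by exactly `τ` or, once within distance `τ`,
onto `a` itself; so the distance to `a` drops by `τ` per step until it vanishes, and in fact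
`‖v k - a‖ = max 0 (‖v₋₁ - a‖ - (k + 1) τ)`.
-/

noncomputable def clip {E : Type*} [NormedAddCommGroup E] [NormedSpace ℝ E]
    (τ : ℝ) (x : E) : E := if ‖x‖ ≤ τ then x else (τ / ‖x‖) • x

section Clip

variable {E : Type*} [NormedAddCommGroup E] [NormedSpace ℝ E] {τ : ℝ}

theorem norm_sub_clip (hτ : 0 ≤ τ) (x : E) : ‖x - clip τ x‖ = max 0 (‖x‖ - τ) := by
  unfold clip
  split_ifs with hx
  · simp [hx]
  · rw [not_le] at hx
    have hpos : 0 < ‖x‖ := hτ.trans_lt hx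
    have hfactor : 0 ≤ 1 - τ / ‖x‖ := by
      rw [sub_nonneg, div_le_one hpos]
      exact hx.le
    calc ‖x - (τ / ‖x‖) • x‖ = (1 - τ / ‖x‖) * ‖x‖ := by
          rw [← Real.norm_of_nonneg hfactor, ← norm_smul, sub_smul, one_smul]
      _ = ‖x‖ - τ := by field_simp
      _ = max 0 (‖x‖ - τ) := (max_eq_right (by linarith)).symm

theorem norm_add_clip_sub_sub (hτ : 0 ≤ τ) (a x : E) :
    ‖x + clip τ (a - x) - a‖ = max 0 (‖x - a‖ - τ) := by
  rw [norm_sub_rev x a, ← norm_sub_clip hτ, ← norm_neg]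
  congr 1
  abel

theorem norm_clip_iterate_sub (hτ : 0 ≤ τ) {a vinit : E} {v : ℕ → E}
    (h0 : v 0 = vinit + clip τ (a - vinit))
    (hrec : ∀ k : ℕ, v (k + 1) = v k + clip τ (a - v k)) (k : ℕ) :
    ‖v k - a‖ = max 0 (‖vinit - a‖ - (k + 1) * τ) := by
  induction k with
  | zero => simp [h0, norm_add_clip_sub_sub hτ]
  | succ k ih =>
    rw [hrec, norm_add_clip_sub_sub hτ, ih, ← max_sub_sub_right, ← max_assoc,
      max_eq_left (by linarith : 0 - τ ≤ 0)]
    congr 1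
    push_cast
    ring

end Clip

theorem clip21_avg_single {d : ℕ} (τ : ℝ) (hτ : 0 < τ)
    (a vinit : EuclideanSpace ℝ (Fin d)) (v : ℕ → EuclideanSpace ℝ (Fin d))
    (h0 : v 0 = vinit + clip τ (a - vinit))
    (hrec : ∀ k : ℕ, v (k + 1) = v k + clip τ (a - v k)) :
    (∀ k : ℕ, ‖v k - a‖ ≤ max 0 (‖vinit - a‖ - (k + 1) * τ)) ∧
    (∀ k : ℕ, (⌈‖vinit - a‖ / τ - 1⌉ : ℤ) ≤ (k : ℤ) → v k = a) := by
  have hdist := norm_clip_iterate_sub hτ.le h0 hrec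
  refine ⟨fun k => (hdist k).le, fun k hk => ?_⟩
  have hreached : ‖vinit - a‖ - (k + 1) * τ ≤ 0 := by
    have hk' : ‖vinit - a‖ / τ ≤ k + 1 := by
      have := Int.ceil_le.1 hk
      push_cast at this
      linarith
    rw [div_le_iff₀ hτ] at hk'
    linarith
  rw [← sub_eq_zero, ← norm_eq_zero, hdist k, max_eq_left hreached]
end

section
/- Fix k ≥ 1 and consider single-node Clip21-GD with the representation v_k = (1−η_k)v_{k-1} + η_k∇f(x_k), η_k ∈ [0,1], x_k = x_{k-1} − γv_{k-1}, where f has L-Lipschitz gradient. Suppose (γ/2)‖∇f(x_{k-1})‖² ≤ φ₀, (γ/4)‖v_{k-1}‖² ≤ φ₀, and γ ≤ (1 − 1/√2)/L for some φ₀ ≥ 0. Then ‖v_k‖ ≤ √(4φ₀/γ). -/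
/-!
Put `r = √(4φ₀/γ)`. Since `v_k` is a convex combination of `v_{k-1}` and `∇f(x_k)`, it lies in the
closed ball of radius `r` as soon as both of these do. For `v_{k-1}` this is the hypothesis; for
`∇f(x_k)` it follows from `‖∇f(x_{k-1})‖ ≤ r/√2` and the Lipschitz estimate
`‖∇f(x_k) - ∇f(x_{k-1})‖ ≤ Lγ‖v_{k-1}‖ ≤ (1 - 1/√2) r`.
-/

theorem le_sqrt_div_of_mul_sq_le {a c φ : ℝ} (hc : 0 < c) (h : c * a ^ 2 ≤ φ) :
    a ≤ √(φ / c) :=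
  (le_abs_self a).trans <| Real.abs_le_sqrt <| (le_div_iff₀' hc).2 h

section

variable {E F : Type*} [SeminormedAddCommGroup E] [NormedSpace ℝ E] [SeminormedAddCommGroup F]

theorem norm_apply_sub_smul_le {g : E → F} {L γ θ r : ℝ}
    (hlip : ∀ x y, ‖g x - g y‖ ≤ L * ‖x - y‖) (hL : 0 ≤ L) (hγ : 0 ≤ γ)
    (hstep : L * γ ≤ 1 - θ) {x v : E} (hx : ‖g x‖ ≤ θ * r) (hv : ‖v‖ ≤ r) :
    ‖g (x - γ • v)‖ ≤ r := by
  have hdist : ‖x - γ • v - x‖ = γ * ‖v‖ := by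
    rw [sub_sub_cancel_left, norm_neg, norm_smul, Real.norm_of_nonneg hγ]
  calc ‖g (x - γ • v)‖
      ≤ ‖g x‖ + ‖g (x - γ • v) - g x‖ := norm_le_insert' _ _
    _ ≤ θ * r + L * γ * ‖v‖ := by
        gcongr
        simpa only [hdist, mul_assoc] using hlip (x - γ • v) x
    _ ≤ θ * r + (1 - θ) * r := by
        gcongr
        exact (mul_nonneg hL hγ).trans hstep
    _ = r := by ring

end

theorem clip21_gd_v_bound_general {d : ℕ} (L γ φ₀ : ℝ) (hL : 0 < L) (hγ : 0 < γ)
    (f : EuclideanSpace ℝ (Fin d) → ℝ)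
    (hlip : ∀ x y, ‖gradient f x - gradient f y‖ ≤ L * ‖x - y‖)
    (ηk : ℝ) (hηk0 : 0 ≤ ηk) (hηk1 : ηk ≤ 1)
    (xkm1 vkm1 xk vk : EuclideanSpace ℝ (Fin d))
    (hxk : xk = xkm1 - γ • vkm1)
    (hvk : vk = (1 - ηk) • vkm1 + ηk • gradient f xk)
    (hgrad : γ / 2 * ‖gradient f xkm1‖ ^ 2 ≤ φ₀)
    (hvprev : γ / 4 * ‖vkm1‖ ^ 2 ≤ φ₀)
    (hγle : γ ≤ (1 - 1 / Real.sqrt 2) / L) :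
    ‖vk‖ ≤ Real.sqrt (4 * φ₀ / γ) := by
  have hγ4 : 0 < γ / 4 := by positivity
  have hradius : φ₀ / (γ / 4) = 4 * φ₀ / γ := by rw [div_div_eq_mul_div, mul_comm]
  have hv : ‖vkm1‖ ≤ √(4 * φ₀ / γ) := hradius ▸ le_sqrt_div_of_mul_sq_le hγ4 hvprev
  have hg : ‖gradient f xkm1‖ ≤ 1 / √2 * √(4 * φ₀ / γ) := by
    rw [one_div_mul_eq_div, le_div_iff₀' (by positivity), ← hradius]
    refine le_sqrt_div_of_mul_sq_le hγ4 (le_of_eq_of_le ?_ hgrad)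
    rw [mul_pow, Real.sq_sqrt zero_le_two]
    ring
  have hgk : ‖gradient f xk‖ ≤ √(4 * φ₀ / γ) :=
    hxk ▸ norm_apply_sub_smul_le hlip hL.le hγ.le ((le_div_iff₀' hL).1 hγle) hg hv
  rw [hvk, ← mem_closedBall_zero_iff]
  exact convex_closedBall _ _ (mem_closedBall_zero_iff.2 hv) (mem_closedBall_zero_iff.2 hgk)
    (sub_nonneg.2 hηk1) hηk0 (sub_add_cancel 1 ηk)

theorem clip21_gd_v_bound {d : ℕ} (L γ φ₀ : ℝ) (hL : 0 < L) (hγ : 0 < γ)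
    (hφ₀ : 0 ≤ φ₀)
    (f : EuclideanSpace ℝ (Fin d) → ℝ)
    (hdiff : Differentiable ℝ f)
    (hlip : ∀ x y, ‖gradient f x - gradient f y‖ ≤ L * ‖x - y‖)
    (ηk : ℝ) (hηk0 : 0 ≤ ηk) (hηk1 : ηk ≤ 1)
    (xkm1 vkm1 xk vk : EuclideanSpace ℝ (Fin d))
    (hxk : xk = xkm1 - γ • vkm1)
    (hvk : vk = (1 - ηk) • vkm1 + ηk • gradient f xk)
    (hgrad : γ / 2 * ‖gradient f xkm1‖ ^ 2 ≤ φ₀)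
    (hvprev : γ / 4 * ‖vkm1‖ ^ 2 ≤ φ₀)
    (hγle : γ ≤ (1 - 1 / Real.sqrt 2) / L) :
    ‖vk‖ ≤ Real.sqrt (4 * φ₀ / γ) :=
  clip21_gd_v_bound_general L γ φ₀ hL hγ f hlip ηk hηk0 hηk1 xkm1 vkm1 xk vk hxk hvk hgrad hvprev
    hγle
end

section
/- Let η ∈ (0,1], f have L-Lipschitz gradient, and let v_{k+1} = (1−η_{k+1})v_k + η_{k+1}∇f(x_{k+1}) with η_{k+1} ≥ η. Then ‖∇f(x_{k+1}) − v_{k+1}‖² ≤ (1−η)(1−η/2)·‖∇f(x_k) − v_k‖² + (1 + 2/η)(1−η)²L²·‖x_{k+1} − x_k‖². -/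
/-! Averaging with the fresh gradient shrinks the error `∇f(x_{k+1}) - v_k` by the exact factor
`1 - η_{k+1} ≤ 1 - η`; the triangle inequality and the Lipschitz bound on `∇f` then compare it
with the previous error `∇f(x_k) - v_k`, and Young's inequality with `θ = η / 2` splits the square,
the factor `(1 - η)(1 + η/2) ≤ 1 - η/2` absorbing the `1 + θ`. -/

theorem norm_sub_smul_add_smul_self {E : Type*} [SeminormedAddCommGroup E] [NormedSpace ℝ E]
    {t : ℝ} (ht : t ≤ 1) (g v : E) :
    ‖g - ((1 - t) • v + t • g)‖ = (1 - t) * ‖g - v‖ := by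
  have hsmul : g - ((1 - t) • v + t • g) = (1 - t) • (g - v) := by module
  rw [hsmul, norm_smul, Real.norm_of_nonneg (by linarith)]

theorem add_sq_le_one_add_mul_sq_add_one_add_div_mul_sq {θ : ℝ} (hθ : 0 < θ) (a b : ℝ) :
    (a + b) ^ 2 ≤ (1 + θ) * a ^ 2 + (1 + 1 / θ) * b ^ 2 := by
  have hgap : (1 + θ) * a ^ 2 + (1 + 1 / θ) * b ^ 2 - (a + b) ^ 2 = (θ * a - b) ^ 2 / θ := by
    field_simp
    ring
  nlinarith [div_nonneg (sq_nonneg (θ * a - b)) hθ.le]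

theorem one_sub_sq_mul_add_sq_le {η : ℝ} (hη0 : 0 < η) (hη1 : η ≤ 1) (a b : ℝ) :
    (1 - η) ^ 2 * (a + b) ^ 2 ≤
      (1 - η) * (1 - η / 2) * a ^ 2 + (1 + 2 / η) * (1 - η) ^ 2 * b ^ 2 := by
  have young := add_sq_le_one_add_mul_sq_add_one_add_div_mul_sq (half_pos hη0) a b
  rw [one_div_div] at young
  have hfactor : (1 - η) * (1 + η / 2) ≤ 1 - η / 2 := by nlinarith
  calc (1 - η) ^ 2 * (a + b) ^ 2
      ≤ (1 - η) ^ 2 * ((1 + η / 2) * a ^ 2 + (1 + 2 / η) * b ^ 2) := by gcongr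
    _ = (1 - η) * ((1 - η) * (1 + η / 2)) * a ^ 2 + (1 + 2 / η) * (1 - η) ^ 2 * b ^ 2 := by ring
    _ ≤ (1 - η) * (1 - η / 2) * a ^ 2 + (1 + 2 / η) * (1 - η) ^ 2 * b ^ 2 := by
        gcongr

theorem clip21_gd_contraction_general {d : ℕ} (L η ηk1 : ℝ)
    (hη0 : 0 < η) (hηk1 : η ≤ ηk1) (hηk1' : ηk1 ≤ 1)
    (f : EuclideanSpace ℝ (Fin d) → ℝ)
    (hlip : ∀ x y, ‖gradient f x - gradient f y‖ ≤ L * ‖x - y‖)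
    (xk xk1 vk vk1 : EuclideanSpace ℝ (Fin d))
    (hvk1 : vk1 = (1 - ηk1) • vk + ηk1 • gradient f xk1) :
    ‖gradient f xk1 - vk1‖ ^ 2 ≤
      (1 - η) * (1 - η / 2) * ‖gradient f xk - vk‖ ^ 2
      + (1 + 2 / η) * (1 - η) ^ 2 * L ^ 2 * ‖xk1 - xk‖ ^ 2 := by
  have hη1 : η ≤ 1 := hηk1.trans hηk1'
  have htriangle : ‖gradient f xk1 - vk‖ ≤ ‖gradient f xk - vk‖ + L * ‖xk1 - xk‖ := by
    linarith [norm_sub_le_norm_sub_add_norm_sub (gradient f xk1) (gradient f xk) vk,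
      hlip xk1 xk]
  calc ‖gradient f xk1 - vk1‖ ^ 2 = ((1 - ηk1) * ‖gradient f xk1 - vk‖) ^ 2 := by
        rw [hvk1, norm_sub_smul_add_smul_self hηk1']
    _ ≤ ((1 - η) * (‖gradient f xk - vk‖ + L * ‖xk1 - xk‖)) ^ 2 := by
        have h1ηk1_nonneg : 0 ≤ 1 - ηk1 := by linarith
        have h1η_nonneg : 0 ≤ 1 - η := by linarith
        gcongr
    _ ≤ _ := by
        rw [mul_pow]
        linarith [one_sub_sq_mul_add_sq_le hη0 hη1
          ‖gradient f xk - vk‖ (L * ‖xk1 - xk‖), mul_pow L ‖xk1 - xk‖ 2]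

theorem clip21_gd_contraction {d : ℕ} (L η ηk1 : ℝ) (hL : 0 < L)
    (hη0 : 0 < η) (hη1 : η ≤ 1) (hηk1 : η ≤ ηk1) (hηk1' : ηk1 ≤ 1)
    (f : EuclideanSpace ℝ (Fin d) → ℝ)
    (hdiff : Differentiable ℝ f)
    (hlip : ∀ x y, ‖gradient f x - gradient f y‖ ≤ L * ‖x - y‖)
    (xk xk1 vk vk1 : EuclideanSpace ℝ (Fin d))
    (hvk1 : vk1 = (1 - ηk1) • vk + ηk1 • gradient f xk1) :
    ‖gradient f xk1 - vk1‖ ^ 2 ≤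
      (1 - η) * (1 - η / 2) * ‖gradient f xk - vk‖ ^ 2
      + (1 + 2 / η) * (1 - η) ^ 2 * L ^ 2 * ‖xk1 - xk‖ ^ 2 :=
  clip21_gd_contraction_general L η ηk1 hη0 hηk1 hηk1' f hlip xk xk1 vk vk1 hvk1
end
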